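/- The fourth composition power of a first-order differential operator L satisfies L⁴ = L^{•4} + 6·(L∘L) • L^{•2} + 4·L • (L²∘L) + 3·(L∘L)^{•2} + L³ ∘ L. -/

import Mathlib

open Finsupp

/-- The space of linear differential operators in `n` variables (with polynomial
coefficients over `ℂ`): a formal finite sum `Σ_α u_α ∂^α`. -/
abbrev Diff (n : ℕ) := (Fin n →₀ ℕ) →₀ MvPolynomial (Fin n) ℂ

/-- The operator `∂^α = ∂₁^{α₁} ⋯ ∂ₙ^{αₙ}` acting on coefficient functions. -/
noncomputable def Dop {n : ℕ} (α : Fin n →₀ ℕ) :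
    Module.End ℂ (MvPolynomial (Fin n) ℂ) :=
  (List.ofFn fun i : Fin n => ((MvPolynomial.pderiv i).toLinearMap) ^ (α i)).prod

/-- White multiplication: `(u ∂^α) ∘ (v ∂^β) = u ∂^α(v) ∂^β`, extended bilinearly. -/
noncomputable def white {n : ℕ} (X Y : Diff n) : Diff n :=
  X.sum fun α u => Y.sum fun β v => Finsupp.single β (u * Dop α v)

/-- Black multiplication: `(u ∂^α) • (v ∂^β) = u v ∂^{α+β}`, extended bilinearly. -/
noncomputable def black {n : ℕ} (X Y : Diff n) : Diff n :=
  X.sum fun α u => Y.sum fun β v => Finsupp.single (α + β) (u * v)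

/-- Composition of differential operators:
`(u ∂^α) ⋄ (v ∂^β) = Σ_{γ ≤ α} binom(α,γ) u ∂^γ(v) ∂^{α+β-γ}`, extended bilinearly. -/
noncomputable def diam {n : ℕ} (X Y : Diff n) : Diff n :=
  X.sum fun α u => Y.sum fun β v =>
    ∑ γ ∈ Finset.Iic α,
      Finsupp.single (α + β - γ) (((∏ i, ((α i).choose (γ i)) : ℕ) : ℂ) • (u * Dop γ v))

/-- A differential operator is of first order (a vector field) if it has the
form `Σ_i u_i ∂_i`, i.e. every multi-index in its support has total degree 1. -/
def IsVect {n : ℕ} (X : Diff n) : Prop :=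
  ∀ α ∈ X.support, (α.sum fun _ k => k) = 1

/-- The identity differential operator `1·∂^0`. -/
noncomputable def unitD {n : ℕ} : Diff n := Finsupp.single 0 1

/-- Composition (`⋄`-)power `L^m = L ⋄ ⋯ ⋄ L`. -/
noncomputable def dpow {n : ℕ} (L : Diff n) : ℕ → Diff n
  | 0 => unitD
  | m + 1 => diam L (dpow L m)

/-- Black power `X^{•k} = X • ⋯ • X`. -/
noncomputable def bpow {n : ℕ} (X : Diff n) : ℕ → Diff n
  | 0 => unitD
  | k + 1 => black X (bpow X k)

/-!
For a vector field `L = Σ uᵢ ∂ᵢ` the composition splits as `L ⋄ Y = L • Y + L ∘ Y`, the map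
`L ∘ -` is a derivation of the commutative algebra `(Diff n, •)` killing its unit, and
`L ∘ (Y ∘ Z) = (L ∘ Y) ∘ Z + (L • Y) ∘ Z` (Leibniz rule for `∂ᵢ` applied to `v ∂^β w`).
Unfolding `L⁴ = L ⋄ (L ⋄ (L ⋄ L))` with these rules and collecting terms in the commutative
`•`-algebra gives the identity.
-/

theorem MvPolynomial.commute_pderiv {R σ : Type*} [CommSemiring R] (i j : σ) :
    Commute (pderiv i : Derivation R (MvPolynomial σ R) (MvPolynomial σ R)).toLinearMap
      (pderiv j).toLinearMap := by
  classical
  refine LinearMap.ext fun p => ?_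
  simp only [Module.End.mul_apply, Derivation.coeFn_coe]
  have hX : ∀ k l s : σ, pderiv k (pderiv l (X s : MvPolynomial σ R)) = 0 := by
    intro k l s
    rw [pderiv_X, Pi.single_apply]
    split_ifs <;> simp
  induction p using MvPolynomial.induction_on with
  | C a => simp
  | add p q hp hq => simp only [map_add, hp, hq]
  | mul_X p s hp =>
    simp only [pderiv_mul, map_add, hp, hX]
    ring

theorem List.prod_ofFn_eq_noncommProd {M : Type*} [Monoid M] {m : ℕ} (f : Fin m → M)
    (comm : _root_.Pairwise (Function.onFun Commute f)) :
    (List.ofFn f).prod = Finset.univ.noncommProd f (comm.set_pairwise _) := by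
  simp only [Finset.noncommProd, Fin.univ_val_map, Multiset.noncommProd_coe]

theorem MvPolynomial.pairwise_commute_pderiv_pow {R σ : Type*} [CommSemiring R] (k : σ → ℕ) :
    Pairwise (Function.onFun Commute fun i =>
      (pderiv i : Derivation R (MvPolynomial σ R) (MvPolynomial σ R)).toLinearMap ^ k i) :=
  fun i j _ => (commute_pderiv i j).pow_pow _ _

section Dop

variable {n : ℕ}

theorem Dop_eq_noncommProd (α : Fin n →₀ ℕ) :
    Dop α = Finset.univ.noncommProd (fun i => (MvPolynomial.pderiv i).toLinearMap ^ α i)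
      ((MvPolynomial.pairwise_commute_pderiv_pow α).set_pairwise _) :=
  List.prod_ofFn_eq_noncommProd _ (MvPolynomial.pairwise_commute_pderiv_pow α)

theorem Dop_zero : Dop (0 : Fin n →₀ ℕ) = 1 := by
  simp [Dop, List.ofFn_const]

theorem Dop_add (α β : Fin n →₀ ℕ) : Dop (α + β) = Dop α * Dop β := by
  rw [Dop_eq_noncommProd, Dop_eq_noncommProd, Dop_eq_noncommProd,
    ← Finset.noncommProd_mul_distrib]
  · exact Finset.noncommProd_congr rfl (fun i _ => pow_add _ _ _) _
  · exact fun i _ j _ _ => (MvPolynomial.commute_pderiv i j).pow_pow _ _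

theorem Dop_single_one (i : Fin n) :
    Dop (Finsupp.single i 1) = (MvPolynomial.pderiv (R := ℂ) i).toLinearMap := by
  rw [Dop_eq_noncommProd, ← Finset.mul_noncommProd_erase _ (Finset.mem_univ i)]
  have hrest : ∀ j ∈ Finset.univ.erase i,
      (MvPolynomial.pderiv (R := ℂ) j).toLinearMap ^ (Finsupp.single i 1 j) = 1 := by
    intro j hj
    simp [Finsupp.single_eq_of_ne (Finset.ne_of_mem_erase hj)]
  refine (congrArg (_ * ·) (Finset.noncommProd_eq_pow_card _ _ _ 1 hrest)).trans ?_
  simp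

end Dop

theorem Finsupp.Iic_single_one {ι : Type*} [DecidableEq ι] (i : ι) :
    Finset.Iic (single i 1) = {0, single i 1} := by
  ext γ
  simp only [Finset.mem_Iic, Finset.mem_insert, Finset.mem_singleton]
  refine ⟨fun h => ?_, by rintro (rfl | rfl) <;> simp⟩
  have hsupp : γ.support ⊆ {i} := (support_mono h).trans support_single_subset
  have hi : γ i ≤ 1 := by simpa using h i
  interval_cases hγi : γ i
  · exact .inl (by simpa using eq_single_iff.2 ⟨hsupp, hγi⟩)
  · exact .inr (eq_single_iff.2 ⟨hsupp, hγi⟩)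

section Products

variable {n : ℕ}

@[simp]
theorem white_single_single (α β : Fin n →₀ ℕ) (u v : MvPolynomial (Fin n) ℂ) :
    white (single α u) (single β v) = single β (u * Dop α v) := by
  simp [white]

@[simp]
theorem black_single_single (α β : Fin n →₀ ℕ) (u v : MvPolynomial (Fin n) ℂ) :
    black (single α u) (single β v) = single (α + β) (u * v) := by
  simp [black]

@[simp]
theorem white_zero_left (Y : Diff n) : white 0 Y = 0 := by
  simp [white]

@[simp]
theorem white_zero_right (X : Diff n) : white X 0 = 0 := by
  simp [white]

theorem white_add_left (X X' Y : Diff n) : white (X + X') Y = white X Y + white X' Y := by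
  refine sum_add_index' (fun _ => by simp) fun α u u' => ?_
  simp only [add_mul, single_add, sum_add]

theorem white_add_right (X Y Y' : Diff n) : white X (Y + Y') = white X Y + white X Y' := by
  rw [white, white, white, ← sum_add]
  refine sum_congr fun α _ => sum_add_index' (fun _ => by simp) fun β v v' => ?_
  simp only [map_add, mul_add, single_add]

theorem black_eq_coeff_mul (X Y : Diff n) :
    black X Y = (AddMonoidAlgebra.ofCoeff X * AddMonoidAlgebra.ofCoeff Y).coeff := by
  simp [AddMonoidAlgebra.mul_def, black, AddMonoidAlgebra.coeff_single]

theorem black_comm (X Y : Diff n) : black X Y = black Y X := by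
  rw [black_eq_coeff_mul, black_eq_coeff_mul, mul_comm]

theorem black_assoc (X Y Z : Diff n) : black (black X Y) Z = black X (black Y Z) := by
  simp only [black_eq_coeff_mul, AddMonoidAlgebra.ofCoeff_coeff, mul_assoc]

theorem black_unitD (X : Diff n) : black X unitD = X := by
  simp [black_eq_coeff_mul, unitD, ← AddMonoidAlgebra.one_def]

@[simp]
theorem black_zero_left (Y : Diff n) : black 0 Y = 0 := by
  simp [black]

@[simp]
theorem black_zero_right (X : Diff n) : black X 0 = 0 := by
  simp [black]

theorem black_add_left (X X' Y : Diff n) : black (X + X') Y = black X Y + black X' Y := by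
  simp only [black_eq_coeff_mul, AddMonoidAlgebra.ofCoeff_add, add_mul,
    AddMonoidAlgebra.coeff_add]

theorem black_add_right (X Y Y' : Diff n) : black X (Y + Y') = black X Y + black X Y' := by
  simp only [black_eq_coeff_mul, AddMonoidAlgebra.ofCoeff_add, mul_add,
    AddMonoidAlgebra.coeff_add]

end Products

namespace IsVect

variable {n : ℕ} {L : Diff n}

@[elab_as_elim]
theorem induction {P : Diff n → Prop} (hL : IsVect L) (zero : P 0)
    (add : ∀ X Y, P X → P Y → P (X + Y)) (single : ∀ i u, P (single (single i 1) u)) : P L := by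
  rw [← L.sum_single]
  refine Finset.sum_induction _ P add zero fun α hα => ?_
  obtain ⟨i, rfl⟩ := (sum_eq_one_iff α).1 (hL α hα)
  exact single i _

theorem white_unitD (hL : IsVect L) : white L unitD = 0 := by
  refine hL.induction (by simp) (fun X Y hX hY => by rw [white_add_left, hX, hY, add_zero]) ?_
  intro i u
  simp [unitD, Dop_single_one]

theorem diam_eq_black_add_white (hL : IsVect L) (Y : Diff n) :
    diam L Y = black L Y + white L Y := by
  unfold diam black white
  rw [← sum_add]
  refine sum_congr fun α hα => ?_
  rw [← sum_add]
  refine sum_congr fun β _ => ?_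
  obtain ⟨i, rfl⟩ := (sum_eq_one_iff α).1 (hL α hα)
  rw [Iic_single_one, Finset.sum_pair (by simp [ne_comm])]
  simp [Dop_zero]

theorem white_black (hL : IsVect L) (Y Z : Diff n) :
    white L (black Y Z) = black (white L Y) Z + black Y (white L Z) := by
  refine hL.induction (by simp) (fun X X' hX hX' => ?_) fun i u => ?_
  · simp only [white_add_left, black_add_left, black_add_right, hX, hX']
    abel
  induction Y using Finsupp.induction_linear with
  | zero => simp
  | add Y Y' hY hY' =>
    simp only [black_add_left, white_add_right, hY, hY']
    abel
  | single β v =>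
    induction Z using Finsupp.induction_linear with
    | zero => simp
    | add Z Z' hZ hZ' =>
      simp only [black_add_right, white_add_right, hZ, hZ']
      abel
    | single γ w =>
      simp only [black_single_single, white_single_single, Dop_single_one, ← single_add]
      congr 1
      simp only [Derivation.coeFn_coe, MvPolynomial.pderiv_mul]
      ring

theorem white_white (hL : IsVect L) (Y Z : Diff n) :
    white L (white Y Z) = white (white L Y) Z + white (black L Y) Z := by
  refine hL.induction (by simp) (fun X X' hX hX' => ?_) fun i u => ?_
  · simp only [white_add_left, black_add_left, hX, hX']
    abel
  induction Y using Finsupp.induction_linear with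
  | zero => simp
  | add Y Y' hY hY' =>
    simp only [black_add_right, white_add_left, white_add_right, hY, hY']
    abel
  | single β v =>
    induction Z using Finsupp.induction_linear with
    | zero => simp
    | add Z Z' hZ hZ' =>
      simp only [white_add_right, hZ, hZ']
      abel
    | single γ w =>
      simp only [black_single_single, white_single_single, Dop_add, Dop_single_one,
        ← single_add]
      congr 1
      simp only [Module.End.mul_apply, Derivation.coeFn_coe, MvPolynomial.pderiv_mul]
      ring

end IsVect

/-- `L⁴ = L^{•4} + 6·(L∘L)•L^{•2} + 4·L•(L²∘L) + 3·(L∘L)^{•2} + L³∘L`. -/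
theorem dpow_four {n : ℕ} (L : Diff n) (hL : IsVect L) :
    dpow L 4 =
      bpow L 4 + 6 • black (white L L) (bpow L 2) +
        4 • black L (white (dpow L 2) L) + 3 • bpow (white L L) 2 +
        white (dpow L 3) L := by
  simp only [dpow, bpow, hL.diam_eq_black_add_white, hL.white_unitD, black_unitD, add_zero,
    black_add_left, black_add_right, white_add_left, white_add_right, hL.white_black,
    hL.white_white, smul_add]
  -- ordered rewriting with commutativity and associativity normalizes every `black` product,
  -- also those inside the arguments of `white`
  simp only [black_comm, black_assoc]
  abel
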